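/- Let G be a connected bipartite finite simple graph with minimum degree δ(G) ≥ 3 such that every nonempty connected induced subgraph H of G with δ(H) ≥ 3 satisfies γ_3(H) = γ(H) + 1, and let D be a minimum 3-dominating set of G. Then every vertex of G outside D has degree exactly 3 in G. -/

import Mathlib

/-!
Applied to `G` itself, the hypothesis gives `|D| = γ(G) + 1`, so trading a part `T ⊆ D` for a
set `X` such that `X ∪ (D \ T)` still dominates `G` forces `|T| ≤ |X| + 1`.

First, `V \ D` is independent: if `w ∉ D` had a neighbour `y ∉ D`, trade two `D`-neighbours of
each (four distinct vertices, by bipartiteness) for `{w, y}`; bipartiteness also guarantees that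
every other vertex outside `D` keeps a neighbour in what is left of `D`.

Next, if `v ∉ D` had four neighbours `U`, then for each `u ∈ U` trading `U \ {u}` for `{v}` can
only fail because some vertex `w u`, a blocker, has neighbourhood exactly `U \ {u}`. The nine
vertices `v`, `U`, `w '' U` induce a connected graph of minimum degree 3 that is dominated by
`{u, w u}` but has no 3-dominating set with fewer than 4 vertices, contradicting the hypothesis.
-/

/-- `D` is a `k`-dominating set of `G`: every vertex outside `D` has
at least `k` neighbors in `D`. -/
def IsKDomSet {V : Type*} (G : SimpleGraph V) (k : ℕ) (D : Set V) : Prop :=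
  ∀ v ∉ D, k ≤ (G.neighborSet v ∩ D).ncard

/-- The `k`-domination number: minimum cardinality of a `k`-dominating set. -/
noncomputable def kdomNum {V : Type*} (G : SimpleGraph V) (k : ℕ) : ℕ :=
  sInf {n | ∃ D : Set V, IsKDomSet G k D ∧ D.ncard = n}

open Set SimpleGraph

section

variable {V : Type*} {G : SimpleGraph V} {k : ℕ}

lemma kdomNum_le {S : Set V} (h : IsKDomSet G k S) : kdomNum G k ≤ S.ncard :=
  Nat.sInf_le ⟨S, h, rfl⟩

section InducedSubgraph

variable {W : Set V}

lemma ncard_neighborSet_induce (x : W) :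
    ((G.induce W).neighborSet x).ncard = (G.neighborSet x ∩ W).ncard := by
  rw [← ncard_image_of_injective _ Subtype.val_injective, inter_comm]
  exact congrArg ncard (Subtype.image_preimage_coe W (G.neighborSet x))

lemma isKDomSet_induce_preimage_iff {S : Set V} (hSW : S ⊆ W) :
    IsKDomSet (G.induce W) k (Subtype.val ⁻¹' S) ↔
      ∀ x ∈ W, x ∉ S → k ≤ (G.neighborSet x ∩ S).ncard := by
  have hcard (x : W) : ((G.induce W).neighborSet x ∩ Subtype.val ⁻¹' S).ncard =
      (G.neighborSet x ∩ S).ncard :=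
    ncard_preimage_of_injective_subset_range (s := G.neighborSet x ∩ S) Subtype.val_injective
      (by simpa using inter_subset_right.trans hSW)
  simp only [IsKDomSet, hcard, Subtype.forall, mem_preimage]

lemma kdomNum_induce :
    kdomNum (G.induce W) k =
      sInf {n | ∃ S ⊆ W, (∀ x ∈ W, x ∉ S → k ≤ (G.neighborSet x ∩ S).ncard) ∧ S.ncard = n} := by
  unfold kdomNum
  congr 1
  ext n
  constructor
  · rintro ⟨S, hS, rfl⟩
    have hSW : Subtype.val '' S ⊆ W := by rintro _ ⟨x, -, rfl⟩; exact x.2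
    rw [← preimage_image_eq S Subtype.val_injective, isKDomSet_induce_preimage_iff hSW] at hS
    exact ⟨_, hSW, hS, ncard_image_of_injective S Subtype.val_injective⟩
  · rintro ⟨S, hSW, hS, rfl⟩
    exact ⟨_, (isKDomSet_induce_preimage_iff hSW).2 hS,
      ncard_preimage_of_injective_subset_range Subtype.val_injective (by rwa [Subtype.range_val])⟩

lemma kdomNum_induce_univ : kdomNum (G.induce univ) k = kdomNum G k := by
  rw [kdomNum_induce]
  simp [kdomNum, IsKDomSet]

lemma kdomNum_induce_le {S : Set V} (hSW : S ⊆ W)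
    (hS : ∀ x ∈ W, x ∉ S → k ≤ (G.neighborSet x ∩ S).ncard) :
    kdomNum (G.induce W) k ≤ S.ncard := by
  rw [kdomNum_induce]
  exact Nat.sInf_le ⟨S, hSW, hS, rfl⟩

lemma le_kdomNum_induce {n : ℕ}
    (h : ∀ S ⊆ W, (∀ x ∈ W, x ∉ S → k ≤ (G.neighborSet x ∩ S).ncard) → n ≤ S.ncard) :
    n ≤ kdomNum (G.induce W) k := by
  rw [kdomNum_induce]
  refine le_csInf ⟨W.ncard, W, subset_rfl, fun x hx hxW => absurd hx hxW, rfl⟩ ?_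
  rintro _ ⟨S, hSW, hS, rfl⟩
  exact h S hSW hS

end InducedSubgraph

lemma disjoint_neighborSet_of_adj {A : Set V} (hA : ∀ u v, G.Adj u v → (u ∈ A ↔ v ∉ A))
    {w y : V} (hwy : G.Adj w y) : Disjoint (G.neighborSet w) (G.neighborSet y) :=
  disjoint_left.2 fun a hwa hya => by
    have := hA w y hwy
    have := hA w a hwa
    have := hA y a hya
    tauto

lemma disjoint_neighborSet_or_disjoint_neighborSet {A : Set V}
    (hA : ∀ u v, G.Adj u v → (u ∈ A ↔ v ∉ A)) {w y : V} (hwy : G.Adj w y) (z : V) :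
    Disjoint (G.neighborSet z) (G.neighborSet w) ∨
      Disjoint (G.neighborSet z) (G.neighborSet y) := by
  have := hA w y hwy
  by_cases hzw : z ∈ A ↔ w ∈ A
  · refine Or.inr (disjoint_left.2 fun b hzb hyb => ?_)
    have := hA z b hzb
    have := hA y b hyb
    tauto
  · refine Or.inl (disjoint_left.2 fun a hza hwa => ?_)
    have := hA z a hza
    have := hA w a hwa
    tauto

section Exchange

variable [Finite V] {D T X : Set V}

lemma isKDomSet_one_union_sdiff (hT : ∀ t ∈ T, ∃ x ∈ X, G.Adj t x)
    (hout : ∀ z ∉ D, z ∉ X → ∃ d ∈ D \ T, G.Adj z d) : IsKDomSet G 1 (X ∪ D \ T) := by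
  intro z hz
  rw [mem_union, not_or, mem_sdiff, not_and_not_right] at hz
  suffices ∃ s ∈ X ∪ D \ T, G.Adj z s by
    obtain ⟨s, hs, hzs⟩ := this
    exact (ncard_pos).2 ⟨s, hzs, hs⟩
  by_cases hzD : z ∈ D
  · obtain ⟨x, hx, hzx⟩ := hT z (hz.2 hzD)
    exact ⟨x, Or.inl hx, hzx⟩
  · obtain ⟨d, hd, hzd⟩ := hout z hzD hz.1
    exact ⟨d, Or.inr hd, hzd⟩

lemma ncard_le_ncard_add_one_of_exchange (hγ : D.ncard = kdomNum G 1 + 1) (hTD : T ⊆ D)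
    (hT : ∀ t ∈ T, ∃ x ∈ X, G.Adj t x) (hout : ∀ z ∉ D, z ∉ X → ∃ d ∈ D \ T, G.Adj z d) :
    T.ncard ≤ X.ncard + 1 := by
  have hγ_le := kdomNum_le (isKDomSet_one_union_sdiff hT hout)
  have hunion := ncard_union_le X (D \ T)
  have hsdiff := ncard_sdiff hTD
  have hTD' := ncard_le_ncard hTD
  omega

end Exchange

section MinimumThreeDominatingSet

variable [Finite V] {D : Set V}

lemma mem_of_adj_of_notMem {A : Set V} (hA : ∀ u v, G.Adj u v → (u ∈ A ↔ v ∉ A))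
    (hD : IsKDomSet G 3 D) (hγ : D.ncard = kdomNum G 1 + 1) {w y : V} (hw : w ∉ D)
    (hwy : G.Adj w y) : y ∈ D := by
  by_contra hy
  obtain ⟨P, hP, hP2⟩ := exists_subset_card_eq ((Nat.le_succ 2).trans (hD w hw))
  obtain ⟨Q, hQ, hQ2⟩ := exists_subset_card_eq ((Nat.le_succ 2).trans (hD y hy))
  have hPQ : Disjoint P Q := (disjoint_neighborSet_of_adj hA hwy).mono
    (hP.trans inter_subset_left) (hQ.trans inter_subset_left)
  have hcard := ncard_le_ncard_add_one_of_exchange (X := {w, y}) hγ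
    (union_subset (hP.trans inter_subset_right) (hQ.trans inter_subset_right))
    (by
      rintro t (ht | ht)
      exacts [⟨w, Or.inl rfl, ((hP ht).1 : G.Adj w t).symm⟩,
        ⟨y, Or.inr rfl, ((hQ ht).1 : G.Adj y t).symm⟩])
    (by
      intro z hzD hzX
      by_contra! hnone
      have hNzD : G.neighborSet z ∩ D ⊆ P ∪ Q := fun d ⟨hzd, hdD⟩ => by
        by_contra h
        exact hnone d ⟨hdD, h⟩ hzd
      have hle : (G.neighborSet z ∩ D).ncard ≤ 2 := by
        rcases disjoint_neighborSet_or_disjoint_neighborSet hA hwy z with h | h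
        · refine hQ2 ▸ ncard_le_ncard fun d hd => (hNzD hd).resolve_left fun hdP => ?_
          exact disjoint_left.1 h hd.1 (hP hdP).1
        · refine hP2 ▸ ncard_le_ncard fun d hd => (hNzD hd).resolve_right fun hdQ => ?_
          exact disjoint_left.1 h hd.1 (hQ hdQ).1
      have := hD z hzD
      omega)
  rw [ncard_union_eq hPQ, hP2, hQ2] at hcard
  have := ncard_insert_le w {y}
  rw [ncard_singleton] at this
  omega

lemma exists_neighborSet_eq (hdeg : ∀ z, k ≤ (G.neighborSet z).ncard)
    (hind : ∀ z ∉ D, G.neighborSet z ⊆ D) (hγ : D.ncard = kdomNum G 1 + 1) {v : V} (hv : v ∉ D)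
    {T : Set V} (hTv : T ⊆ G.neighborSet v) (hT : T.ncard = k) (hk : 3 ≤ k) :
    ∃ w, G.neighborSet w = T := by
  by_contra! hno
  have hcard := ncard_le_ncard_add_one_of_exchange (X := {v}) hγ (hTv.trans (hind v hv))
    (fun t ht => ⟨v, rfl, (hTv ht : G.Adj v t).symm⟩)
    (fun z hzD _ => by
      by_contra! hnone
      have hzT : G.neighborSet z ⊆ T := fun d hzd => by
        by_contra hdT
        exact hnone d ⟨hind z hzD hzd, hdT⟩ hzd
      exact hno z (eq_of_subset_of_ncard_le hzT (hT ▸ hdeg z)))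
  rw [ncard_singleton] at hcard
  omega

end MinimumThreeDominatingSet

section Blockers

variable {v : V} {U : Set V} {w : V → V}

lemma adj_blocker (hw : ∀ u ∈ U, G.neighborSet (w u) = U \ {u}) {u a : V} (hu : u ∈ U)
    (ha : a ∈ U) (hau : a ≠ u) : G.Adj (w u) a := by
  change a ∈ G.neighborSet (w u)
  rw [hw u hu]
  exact ⟨ha, hau⟩

lemma not_adj_blocker (hvU : ∀ u ∈ U, G.Adj v u) (hw : ∀ u ∈ U, G.neighborSet (w u) = U \ {u})
    {u : V} (hu : u ∈ U) : ¬G.Adj v (w u) := fun h => by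
  have hv : v ∈ G.neighborSet (w u) := h.symm
  rw [hw u hu] at hv
  exact G.irrefl (hvU v hv.1)

lemma injOn_blocker (hw : ∀ u ∈ U, G.neighborSet (w u) = U \ {u}) : InjOn w U := by
  intro a ha b hb hab
  by_contra hne
  have h : a ∈ G.neighborSet (w a) := by
    rw [hab, hw b hb]
    exact ⟨ha, hne⟩
  rw [hw a ha] at h
  exact h.2 rfl

lemma induce_connected_of_blockers (hvU : ∀ u ∈ U, G.Adj v u)
    (hw : ∀ u ∈ U, G.neighborSet (w u) = U \ {u}) (hU : 1 < U.ncard) :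
    (G.induce (insert v (U ∪ w '' U))).Connected := by
  rw [connected_iff_exists_forall_reachable]
  refine ⟨⟨v, mem_insert v _⟩, ?_⟩
  have hreach (u : V) (hu : u ∈ U) :
      (G.induce (insert v (U ∪ w '' U))).Reachable ⟨v, mem_insert v _⟩ ⟨u, Or.inr (Or.inl hu)⟩ :=
    (induce_adj.2 (hvU u hu)).reachable
  rintro ⟨x, rfl | hx | ⟨u, hu, rfl⟩⟩
  · rfl
  · exact hreach x hx
  · obtain ⟨a, ha, hau⟩ := exists_ne_of_one_lt_ncard hU u
    exact (hreach a ha).trans (induce_adj.2 (adj_blocker hw hu ha hau).symm).reachable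

variable [Finite V]

lemma le_ncard_neighborSet_induce_blockers (hvU : ∀ u ∈ U, G.Adj v u)
    (hw : ∀ u ∈ U, G.neighborSet (w u) = U \ {u}) (hU : U.ncard = k + 1)
    (x : ↥(insert v (U ∪ w '' U))) :
    k ≤ ((G.induce (insert v (U ∪ w '' U))).neighborSet x).ncard := by
  have hk {u : V} (hu : u ∈ U) : (U \ {u}).ncard = k := by
    rw [ncard_sdiff_singleton_of_mem hu, hU, Nat.add_sub_cancel]
  rw [ncard_neighborSet_induce]
  obtain ⟨x, rfl | hx | ⟨u, hu, rfl⟩⟩ := x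
  · exact (show k ≤ U.ncard by omega).trans
      (ncard_le_ncard fun u hu => ⟨hvU u hu, Or.inr (Or.inl hu)⟩)
  · calc k = (w '' (U \ {x})).ncard := by
          rw [((injOn_blocker hw).mono sdiff_subset).ncard_image, hk hx]
      _ ≤ _ := ncard_le_ncard <| by
          rintro _ ⟨a, ⟨ha, hax⟩, rfl⟩
          exact ⟨(adj_blocker hw ha hx (Ne.symm hax)).symm, Or.inr (Or.inr ⟨a, ha, rfl⟩)⟩
  · exact (hk hu).ge.trans
      (ncard_le_ncard fun a ha => ⟨adj_blocker hw hu ha.1 ha.2, Or.inr (Or.inl ha.1)⟩)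

lemma kdomNum_one_induce_blockers_le_two (hvU : ∀ u ∈ U, G.Adj v u)
    (hw : ∀ u ∈ U, G.neighborSet (w u) = U \ {u}) (hU : U.Nonempty) :
    kdomNum (G.induce (insert v (U ∪ w '' U))) 1 ≤ 2 := by
  obtain ⟨a, ha⟩ := hU
  have hpair : ({a, w a} : Set V).ncard ≤ 2 := (ncard_insert_le a {w a}).trans (by simp)
  refine le_trans (kdomNum_induce_le ?_ ?_) hpair
  · exact insert_subset (Or.inr (Or.inl ha))
      (singleton_subset_iff.2 (Or.inr (Or.inr ⟨a, ha, rfl⟩)))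
  · rintro x (rfl | hx | ⟨u, hu, rfl⟩) hxS
    · exact (ncard_pos).2 ⟨a, hvU a ha, Or.inl rfl⟩
    · have hxa : x ≠ a := fun h => hxS (Or.inl h)
      exact (ncard_pos).2 ⟨w a, (adj_blocker hw ha hx hxa).symm, Or.inr rfl⟩
    · have hua : u ≠ a := by
        rintro rfl
        exact hxS (Or.inr rfl)
      exact (ncard_pos).2 ⟨a, adj_blocker hw hu ha hua.symm, Or.inl rfl⟩

lemma lt_kdomNum_induce_blockers (hvU : ∀ u ∈ U, G.Adj v u)
    (hw : ∀ u ∈ U, G.neighborSet (w u) = U \ {u}) (hU : U.ncard = k + 1) (hk : 1 ≤ k) :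
    k < kdomNum (G.induce (insert v (U ∪ w '' U))) k := by
  refine le_kdomNum_induce fun S hSW hS => ?_
  have hfull (u : V) (hu : u ∈ U) (hwu : w u ∉ S) : U \ {u} ⊆ S := by
    have h := hS (w u) (Or.inr (Or.inr ⟨u, hu, rfl⟩)) hwu
    rw [hw u hu] at h
    have hcard : (U \ {u}).ncard = k := by
      rw [ncard_sdiff_singleton_of_mem hu, hU, Nat.add_sub_cancel]
    exact inter_eq_left.1 (eq_of_subset_of_ncard_le inter_subset_left (hcard ▸ h))
  by_cases hUS : U ⊆ S
  · exact Nat.lt_of_lt_of_le (by omega) (ncard_le_ncard hUS)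
  obtain ⟨b, hbU, hbS⟩ := not_subset.1 hUS
  have hwS : w '' (U \ {b}) ⊆ S := by
    rintro _ ⟨u, ⟨hu, hub⟩, rfl⟩
    by_contra hwu
    exact hbS (hfull u hu hwu ⟨hbU, fun h => hub h.symm⟩)
  obtain ⟨t, htS, htw⟩ : ∃ t ∈ S, t ∉ w '' U := by
    by_cases hvS : v ∈ S
    · refine ⟨v, hvS, ?_⟩
      rintro ⟨u, hu, hwu⟩
      have hu' : u ∈ G.neighborSet (w u) := hwu ▸ hvU u hu
      rw [hw u hu] at hu'
      exact hu'.2 rfl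
    · have h := hS v (mem_insert v _) hvS
      obtain ⟨t, hvt, htS⟩ := (ncard_pos (s := G.neighborSet v ∩ S)).1 (by omega)
      refine ⟨t, htS, ?_⟩
      rintro ⟨u, hu, rfl⟩
      exact not_adj_blocker hvU hw hu hvt
  calc k + 1 = (insert t (w '' (U \ {b}))).ncard := by
        rw [ncard_insert_of_notMem fun h => htw (image_mono sdiff_subset h),
          ((injOn_blocker hw).mono sdiff_subset).ncard_image, ncard_sdiff_singleton_of_mem hbU, hU,
          Nat.add_sub_cancel]
    _ ≤ S.ncard := ncard_le_ncard (insert_subset htS hwS)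

end Blockers

end

/-- Let `G` be a connected bipartite finite graph with minimum degree at
least 3 such that every nonempty connected induced subgraph `H` with
`δ(H) ≥ 3` satisfies `γ_3(H) = γ(H) + 1`, and let `D` be a minimum
3-dominating set of `G`. Then every vertex outside `D` has degree exactly 3
in `G`. -/
theorem statement17 {V : Type*} [Fintype V] (G : SimpleGraph V)
    (hconn : G.Connected)
    (hbip : ∃ A : Set V, ∀ u v : V, G.Adj u v → (u ∈ A ↔ v ∉ A))
    (hdeg : ∀ v, 3 ≤ (G.neighborSet v).ncard)
    (hper : ∀ W : Set V, W.Nonempty → (G.induce W).Connected →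
        (∀ v, 3 ≤ ((G.induce W).neighborSet v).ncard) →
        kdomNum (G.induce W) 3 = kdomNum (G.induce W) 1 + 1)
    (D : Set V) (hD : IsKDomSet G 3 D) (hmin : D.ncard = kdomNum G 3) :
    ∀ v ∉ D, (G.neighborSet v).ncard = 3 := by
  obtain ⟨A, hA⟩ := hbip
  have hγ : D.ncard = kdomNum G 1 + 1 := by
    have h := hper univ (@univ_nonempty _ hconn.nonempty)
      ((induceUnivIso G).connected_iff.2 hconn)
      (fun x => by simpa [ncard_neighborSet_induce] using hdeg x)
    rwa [kdomNum_induce_univ, kdomNum_induce_univ, ← hmin] at h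
  have hind : ∀ z ∉ D, G.neighborSet z ⊆ D := fun z hz _ hzy =>
    mem_of_adj_of_notMem hA hD hγ hz hzy
  intro v hv
  refine le_antisymm (not_lt.1 fun hv4 => ?_) (hdeg v)
  obtain ⟨U, hUv, hU⟩ := exists_subset_card_eq (Nat.succ_le_of_lt hv4)
  choose! w hw using fun u (hu : u ∈ U) => exists_neighborSet_eq hdeg hind hγ hv
    (sdiff_subset.trans hUv) (by rw [ncard_sdiff_singleton_of_mem hu, hU]) le_rfl
  have hvU : ∀ u ∈ U, G.Adj v u := hUv
  have hper' := hper _ (insert_nonempty v _) (induce_connected_of_blockers hvU hw (by omega))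
    (le_ncard_neighborSet_induce_blockers hvU hw hU)
  have hγ₁ := kdomNum_one_induce_blockers_le_two hvU hw (nonempty_of_ncard_ne_zero (by omega))
  have hγ₃ := lt_kdomNum_induce_blockers hvU hw hU (by norm_num)
  omega
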